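/- Assume U satisfies Assumption 1 and P(Z > 0) > 0, with Z nonnegative and finite-valued. Then the problem max_{x∈ℝ^d} E[U(W(x))] is well-posed: there exists a portfolio x⋆ ∈ ℝ^d with finite Euclidean norm such that E[U(W(x))] ≤ E[U(W(x⋆))] < +∞ for all x ∈ ℝ^d. -/

import Mathlib

/-!
With `M ≥ sup U` and `L x = E[M - U(W(x))] ∈ [0, ∞]`, the objective equals `M - L x`, so it
suffices to minimise `L`, which is lower semicontinuous by Fatou's lemma. Every nonzero portfolio
`u` loses more than any given amount with positive probability: on an event `{ε ≤ Z ≤ K}` of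
positive probability, independent of `N`, the Gaussian term `√Z (Aᵀu) ⬝ᵥ N` with `Aᵀu ≠ 0` can be
made as negative as needed. By lower semicontinuity and compactness this probability is bounded
below uniformly on the unit sphere, so `U → -∞` forces `L x → ∞` as `‖x‖ → ∞`, and a lower
semicontinuous coercive function attains its minimum.
-/

open MeasureTheory ProbabilityTheory Filter Matrix
open scoped ENNReal NNReal Topology

noncomputable section

/-- Signed expectation with values in `EReal`. -/
def eexp {Ω : Type*} [MeasurableSpace Ω] (P : Measure Ω) (f : Ω → ℝ) : EReal :=
  ((∫⁻ ω, ENNReal.ofReal (f ω) ∂P : ℝ≥0∞) : EReal) -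
    ((∫⁻ ω, ENNReal.ofReal (-(f ω)) ∂P : ℝ≥0∞) : EReal)

/-- NMVM return vector `X = μ + γ Z + √Z A N`. -/
def nmvmX {Ω : Type*} {d : ℕ} (μ γ : Fin d → ℝ) (A : Matrix (Fin d) (Fin d) ℝ)
    (Z : Ω → ℝ) (N : Ω → Fin d → ℝ) (ω : Ω) : Fin d → ℝ :=
  fun i => μ i + γ i * Z ω + Real.sqrt (Z ω) * (A *ᵥ N ω) i

/-- Next-period wealth `W(x) = W₀(1+r_f) + W₀ xᵀ(X − 𝟏 r_f)` of portfolio `x`. -/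
def wealth {Ω : Type*} {d : ℕ} (μ γ : Fin d → ℝ) (A : Matrix (Fin d) (Fin d) ℝ)
    (Z : Ω → ℝ) (N : Ω → Fin d → ℝ) (rf W0 : ℝ) (x : Fin d → ℝ) (ω : Ω) : ℝ :=
  W0 * (1 + rf) + W0 * ∑ i, x i * (nmvmX μ γ A Z N ω i - rf)

theorem LowerSemicontinuous.exists_forall_le' {α β : Type*} [TopologicalSpace α] [LinearOrder β]
    {f : α → β} (hf : LowerSemicontinuous f) (x₀ : α)
    (h : ∀ᶠ x in cocompact α, f x₀ ≤ f x) : ∃ x, ∀ y, f x ≤ f y := by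
  obtain ⟨K, hK, hKc⟩ := mem_cocompact.1 h
  obtain ⟨x, -, hx⟩ := (hf.lowerSemicontinuousOn _).exists_isMinOn (Set.insert_nonempty x₀ K)
    (hK.insert x₀)
  refine ⟨x, fun y => ?_⟩
  by_cases hy : y ∈ K
  · exact hx (Set.mem_insert_of_mem _ hy)
  · exact (hx (Set.mem_insert x₀ K)).trans (hKc hy)

theorem lowerSemicontinuous_lintegral {X Ω : Type*} [TopologicalSpace X] [FirstCountableTopology X]
    [MeasurableSpace Ω] {μ : Measure Ω} {F : X → Ω → ℝ≥0∞} (hF : ∀ x, AEMeasurable (F x) μ)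
    (hF_lsc : ∀ ω, LowerSemicontinuous fun x => F x ω) :
    LowerSemicontinuous fun x => ∫⁻ ω, F x ω ∂μ :=
  lowerSemicontinuous_iff_le_liminf.2 fun x =>
    (lintegral_mono fun ω => (hF_lsc ω).le_liminf x).trans (lintegral_liminf_le' hF)

theorem EReal.coe_ennreal_sub_eq_sub_of_add_eq {a b c d : ℝ≥0∞} (ha : a ≠ ⊤) (hc : c ≠ ⊤)
    (h : d + a = c + b) : (a : EReal) - b = c - d := by
  rcases eq_or_ne b ⊤ with rfl | hb
  · have : d = ⊤ := by simpa [ha] using h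
    simp [this]
  · have hd : d ≠ ⊤ := ne_top_of_le_ne_top (by simp [hb, hc]) (le_self_add.trans_eq h)
    lift a to ℝ≥0 using ha
    lift b to ℝ≥0 using hb
    lift c to ℝ≥0 using hc
    lift d to ℝ≥0 using hd
    rw [← ENNReal.coe_add, ← ENNReal.coe_add, ENNReal.coe_inj] at h
    have : (a : ℝ) - b = c - d := by
      linarith [congrArg ((↑) : ℝ≥0 → ℝ) h, NNReal.coe_add d a, NNReal.coe_add c b]
    simp only [EReal.coe_nnreal_eq_coe_real, ← EReal.coe_sub, this]

theorem eexp_eq_sub_lintegral {Ω : Type*} [MeasurableSpace Ω] (P : Measure Ω)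
    [IsProbabilityMeasure P] {f : Ω → ℝ} (hf : Measurable f) {M : ℝ} (hM : 0 ≤ M)
    (hfM : ∀ ω, f ω ≤ M) :
    eexp P f = (M : EReal) - ((∫⁻ ω, ENNReal.ofReal (M - f ω) ∂P : ℝ≥0∞) : EReal) := by
  have hpt : ∀ ω, ENNReal.ofReal (M - f ω) + ENNReal.ofReal (f ω) =
      ENNReal.ofReal M + ENNReal.ofReal (-f ω) := by
    intro ω
    rcases le_total 0 (f ω) with h | h
    · rw [← ENNReal.ofReal_add (sub_nonneg.2 (hfM ω)) h, sub_add_cancel,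
        ENNReal.ofReal_of_nonpos (neg_nonpos.2 h), add_zero]
    · rw [ENNReal.ofReal_of_nonpos h, add_zero, sub_eq_add_neg,
        ENNReal.ofReal_add hM (neg_nonneg.2 h)]
  have hsum : ∫⁻ ω, ENNReal.ofReal (M - f ω) ∂P + ∫⁻ ω, ENNReal.ofReal (f ω) ∂P =
      ENNReal.ofReal M + ∫⁻ ω, ENNReal.ofReal (-f ω) ∂P := by
    rw [← lintegral_add_right _ hf.ennreal_ofReal, lintegral_congr hpt,
      lintegral_add_left measurable_const, lintegral_const, measure_univ, mul_one]
  have hfin : ∫⁻ ω, ENNReal.ofReal (f ω) ∂P ≠ ⊤ :=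
    ne_top_of_le_ne_top (ENNReal.ofReal_ne_top (r := M)) <|
      (lintegral_mono fun ω => ENNReal.ofReal_le_ofReal (hfM ω)).trans_eq (by simp)
  rw [eexp, EReal.coe_ennreal_sub_eq_sub_of_add_eq hfin ENNReal.ofReal_ne_top hsum,
    EReal.coe_ennreal_ofReal, max_eq_left hM]

theorem isOpenPosMeasure_gaussianReal (m : ℝ) {v : ℝ≥0} (hv : v ≠ 0) :
    (gaussianReal m v).IsOpenPosMeasure :=
  ⟨fun _ hU hne h0 => hU.measure_ne_zero volume hne (gaussianReal_absolutelyContinuous' m hv h0)⟩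

theorem measure_pi_gaussianReal_dotProduct_lt_pos {ι : Type*} [Fintype ι] (m : ι → ℝ)
    {v : ι → ℝ≥0} (hv : ∀ i, v i ≠ 0) {b : ι → ℝ} (hb : b ≠ 0) (t : ℝ) :
    0 < Measure.pi (fun i => gaussianReal (m i) (v i)) {y | b ⬝ᵥ y < t} := by
  have := fun i => isOpenPosMeasure_gaussianReal (m i) (hv i)
  refine (isOpen_lt (by fun_prop) continuous_const).measure_pos _ ⟨((t - 1) / (b ⬝ᵥ b)) • b, ?_⟩
  have hbb : b ⬝ᵥ b ≠ 0 := dotProduct_self_eq_zero.not.2 hb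
  simp [dotProduct_smul, div_mul_cancel₀ _ hbb]

theorem mulVec_transpose_ne_zero_of_posDef {m n : Type*} [Fintype m] [Fintype n]
    {A : Matrix m n ℝ} (hA : (A * Aᵀ).PosDef) {u : m → ℝ} (hu : u ≠ 0) : Aᵀ *ᵥ u ≠ 0 := by
  intro h
  have := hA.dotProduct_mulVec_pos hu
  rw [← mulVec_mulVec, dotProduct_mulVec, ← mulVec_transpose, star_trivial] at this
  simp [h] at this

theorem exists_measure_preimage_Icc_pos {Ω : Type*} [MeasurableSpace Ω] {P : Measure Ω}
    {Z : Ω → ℝ} (h : 0 < P {ω | 0 < Z ω}) : ∃ ε K : ℝ, 0 < ε ∧ 0 < P (Z ⁻¹' Set.Icc ε K) := by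
  by_contra! hcon
  have hcover : {ω | 0 < Z ω} ⊆ ⋃ n : ℕ, Z ⁻¹' Set.Icc ((n + 1 : ℝ)⁻¹) (n + 1) := by
    intro ω (hz : 0 < Z ω)
    obtain ⟨n, hn⟩ := exists_nat_ge (max (Z ω) (Z ω)⁻¹)
    exact Set.mem_iUnion.2 ⟨n, inv_le_of_inv_le₀ hz (by linarith [le_max_right (Z ω) (Z ω)⁻¹]),
      by linarith [le_max_left (Z ω) (Z ω)⁻¹]⟩
  exact h.ne' <| measure_mono_null hcover <|
    measure_iUnion_null fun n => nonpos_iff_eq_zero.1 (hcon _ _ (by positivity))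

theorem add_mul_add_sqrt_mul_lt {a b c ε K z s : ℝ} (hε : 0 < ε) (hz : z ∈ Set.Icc ε K)
    (hs : s < -((|a| + |b| * K + |c| + 1) / √ε)) : a + b * z + √z * s < c := by
  have hsε : 0 < √ε := Real.sqrt_pos.2 hε
  have hs' : √ε * s < -(|a| + |b| * K + |c| + 1) := by
    have := mul_lt_mul_of_pos_left hs hsε
    rwa [mul_neg, mul_div_cancel₀ _ hsε.ne'] at this
  have hK : 0 ≤ K := hε.le.trans (hz.1.trans hz.2)
  have hs0 : s ≤ 0 := hs.le.trans (neg_nonpos.2 (by positivity))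
  have hsqrt : √z * s ≤ √ε * s := mul_le_mul_of_nonpos_right (Real.sqrt_le_sqrt hz.1) hs0
  have hbz : b * z ≤ |b| * K := by
    calc b * z ≤ |b| * |z| := by rw [← abs_mul]; exact le_abs_self _
      _ ≤ |b| * K := by
        rw [abs_of_pos (hε.trans_le hz.1)]; exact mul_le_mul_of_nonneg_left hz.2 (abs_nonneg b)
  linarith [le_abs_self a, neg_abs_le c]

theorem measure_add_mul_add_sqrt_mul_dotProduct_lt_pos {Ω ι : Type*} [MeasurableSpace Ω]
    {P : Measure Ω} [Fintype ι] {Z : Ω → ℝ} {N : Ω → ι → ℝ} (hN : Measurable N)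
    (hZpos : 0 < P {ω | 0 < Z ω})
    (hNlaw : P.map N = Measure.pi fun _ : ι => gaussianReal 0 1) (hindep : IndepFun Z N P)
    (a b : ℝ) {v : ι → ℝ} (hv : v ≠ 0) (c : ℝ) :
    0 < P {ω | a + b * Z ω + √(Z ω) * (v ⬝ᵥ N ω) < c} := by
  obtain ⟨ε, K, hε, hslab⟩ := exists_measure_preimage_Icc_pos hZpos
  set T := (|a| + |b| * K + |c| + 1) / √ε
  have hhalf : MeasurableSet {y : ι → ℝ | v ⬝ᵥ y < -T} :=
    measurableSet_lt (by fun_prop) measurable_const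
  have hNhalf : 0 < P (N ⁻¹' {y | v ⬝ᵥ y < -T}) := by
    rw [← Measure.map_apply hN hhalf, hNlaw]
    exact measure_pi_gaussianReal_dotProduct_lt_pos _ (fun _ => one_ne_zero) hv _
  calc 0 < P (Z ⁻¹' Set.Icc ε K ∩ N ⁻¹' {y | v ⬝ᵥ y < -T}) := by
        rw [hindep.measure_inter_preimage_eq_mul _ _ measurableSet_Icc hhalf]
        exact ENNReal.mul_pos hslab.ne' hNhalf.ne'
    _ ≤ _ := measure_mono fun ω ⟨hz, hy⟩ => add_mul_add_sqrt_mul_lt hε hz hy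

section Portfolio

variable {Ω ι : Type*} [MeasurableSpace Ω] {P : Measure Ω} [Fintype ι] {Y : Ω → ι → ℝ}

theorem exists_pos_forall_mem_sphere_le_measure_dotProduct_lt (hY : Measurable Y) {c : ℝ}
    (hdown : ∀ u ≠ 0, 0 < P {ω | u ⬝ᵥ Y ω < c}) :
    ∃ q > 0, ∀ u ∈ Metric.sphere (0 : ι → ℝ) 1, q ≤ P {ω | u ⬝ᵥ Y ω < c} := by
  rcases (Metric.sphere (0 : ι → ℝ) 1).eq_empty_or_nonempty with hS | hS
  · exact ⟨1, one_pos, by simp [hS]⟩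
  have hlsc : LowerSemicontinuous fun u : ι → ℝ => P {ω | u ⬝ᵥ Y ω < c} := by
    have hF := lowerSemicontinuous_lintegral (μ := P)
      (F := fun u ω => {u' : ι → ℝ | u' ⬝ᵥ Y ω < c}.indicator 1 u)
      (fun u => (measurable_one.indicator
        (measurableSet_lt (by fun_prop) measurable_const)).aemeasurable)
      (fun ω => (isOpen_lt (by fun_prop) continuous_const).lowerSemicontinuous_indicator
        zero_le_one)
    convert hF using 2 with u
    rw [← lintegral_indicator_one (measurableSet_lt (by fun_prop) measurable_const)]
    rfl
  obtain ⟨u₀, hu₀, hmin⟩ := (hlsc.lowerSemicontinuousOn _).exists_isMinOn hS (isCompact_sphere 0 1)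
  exact ⟨_, hdown u₀ (by rintro rfl; simp at hu₀), hmin⟩

theorem tendsto_lintegral_ofReal_sub_cocompact (hY : Measurable Y)
    (hdown : ∀ u ≠ 0, 0 < P {ω | u ⬝ᵥ Y ω < -1}) {U : ℝ → ℝ} (hUmono : Monotone U)
    (hUbot : Tendsto U atBot atBot) (M : ℝ) :
    Tendsto (fun x : ι → ℝ => ∫⁻ ω, ENNReal.ofReal (M - U (x ⬝ᵥ Y ω)) ∂P)
      (cocompact (ι → ℝ)) (𝓝 ⊤) := by
  obtain ⟨q, hq, hqle⟩ := exists_pos_forall_mem_sphere_le_measure_dotProduct_lt hY hdown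
  set κ : ℝ → ℝ≥0∞ := fun r => ENNReal.ofReal (M - U (-r))
  have hκ : Tendsto κ atTop (𝓝 ⊤) := by
    refine ENNReal.tendsto_ofReal_atTop.comp ?_
    simpa [sub_eq_add_neg] using tendsto_atTop_add_const_left atTop M
      (tendsto_neg_atBot_atTop.comp (hUbot.comp tendsto_neg_atTop_atBot))
  have hκq : Tendsto (fun x : ι → ℝ => κ ‖x‖ * q) (cocompact (ι → ℝ)) (𝓝 ⊤) := by
    have := ENNReal.Tendsto.mul_const (b := q) (hκ.comp (tendsto_norm_cocompact_atTop (E := ι → ℝ)))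
      (Or.inl ENNReal.top_ne_zero)
    rwa [ENNReal.top_mul hq.ne'] at this
  refine tendsto_nhds_top_mono hκq ?_
  filter_upwards [(isCompact_singleton (x := (0 : ι → ℝ))).compl_mem_cocompact] with x (hx : x ≠ 0)
  have hu : ‖x‖⁻¹ • x ∈ Metric.sphere (0 : ι → ℝ) 1 := by
    simp [norm_smul, norm_ne_zero_iff.2 hx]
  have hsub : {ω | (‖x‖⁻¹ • x) ⬝ᵥ Y ω < -1} ⊆
      {ω | κ ‖x‖ ≤ ENNReal.ofReal (M - U (x ⬝ᵥ Y ω))} := by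
    intro ω (hω : (‖x‖⁻¹ • x) ⬝ᵥ Y ω < -1)
    have hxY : x ⬝ᵥ Y ω ≤ -‖x‖ := by
      rw [smul_dotProduct, smul_eq_mul, inv_mul_lt_iff₀ (norm_pos_iff.2 hx)] at hω
      linarith
    exact ENNReal.ofReal_le_ofReal (by linarith [hUmono hxY])
  calc κ ‖x‖ * q ≤ κ ‖x‖ * P {ω | (‖x‖⁻¹ • x) ⬝ᵥ Y ω < -1} := by gcongr; exact hqle _ hu
    _ ≤ κ ‖x‖ * P {ω | κ ‖x‖ ≤ ENNReal.ofReal (M - U (x ⬝ᵥ Y ω))} := by gcongr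
    _ ≤ ∫⁻ ω, ENNReal.ofReal (M - U (x ⬝ᵥ Y ω)) ∂P :=
      mul_meas_ge_le_lintegral₀
        (measurable_const.sub (hUmono.measurable.comp (by fun_prop))).ennreal_ofReal.aemeasurable
        _

theorem exists_forall_eexp_le_of_measure_dotProduct_lt_pos [IsProbabilityMeasure P]
    (hY : Measurable Y) (hdown : ∀ u ≠ 0, 0 < P {ω | u ⬝ᵥ Y ω < -1}) {U : ℝ → ℝ}
    (hUcont : Continuous U) (hUmono : Monotone U) (hUbdd : BddAbove (Set.range U))
    (hUbot : Tendsto U atBot atBot) :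
    ∃ xstar : ι → ℝ, eexp P (fun ω => U (xstar ⬝ᵥ Y ω)) < ⊤ ∧
      ∀ x, eexp P (fun ω => U (x ⬝ᵥ Y ω)) ≤ eexp P fun ω => U (xstar ⬝ᵥ Y ω) := by
  obtain ⟨M, hM⟩ := hUbdd
  have hUM : ∀ w, U w ≤ max M 0 := fun w => (hM ⟨w, rfl⟩).trans (le_max_left _ _)
  set L := fun x : ι → ℝ => ∫⁻ ω, ENNReal.ofReal (max M 0 - U (x ⬝ᵥ Y ω)) ∂P
  have hmeas : ∀ x : ι → ℝ, Measurable fun ω => U (x ⬝ᵥ Y ω) :=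
    fun x => hUcont.measurable.comp (by fun_prop)
  have hL : ∀ x, eexp P (fun ω => U (x ⬝ᵥ Y ω)) = (max M 0 : ℝ) - (L x : EReal) :=
    fun x => eexp_eq_sub_lintegral P (hmeas x) (le_max_right _ _) fun ω => hUM _
  have hL_lsc : LowerSemicontinuous L :=
    lowerSemicontinuous_lintegral (fun x => ((hmeas x).const_sub _).ennreal_ofReal.aemeasurable)
      fun ω => (ENNReal.continuous_ofReal.comp (by fun_prop)).lowerSemicontinuous
  have hL0 : L 0 < ⊤ := by simp [L]
  obtain ⟨xstar, hmin⟩ := hL_lsc.exists_forall_le' 0 <|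
    ((tendsto_lintegral_ofReal_sub_cocompact hY hdown hUmono hUbot _).eventually
      (lt_mem_nhds hL0)).mono fun _ => le_of_lt
  refine ⟨xstar, ?_, fun x => ?_⟩
  · rw [hL]
    exact (EReal.sub_le_sub le_rfl (EReal.coe_ennreal_nonneg _)).trans_lt
      (by simp [EReal.coe_lt_top])
  · rw [hL, hL]
    exact EReal.sub_le_sub le_rfl (EReal.coe_ennreal_le_coe_ennreal_iff.2 (hmin x))

end Portfolio

def excessReturn {Ω : Type*} {d : ℕ} (μ γ : Fin d → ℝ) (A : Matrix (Fin d) (Fin d) ℝ)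
    (Z : Ω → ℝ) (N : Ω → Fin d → ℝ) (rf : ℝ) (ω : Ω) : Fin d → ℝ :=
  fun i => nmvmX μ γ A Z N ω i - rf

section NMVM

variable {Ω : Type*} {d : ℕ} {μ γ : Fin d → ℝ} {A : Matrix (Fin d) (Fin d) ℝ} {Z : Ω → ℝ}
  {N : Ω → Fin d → ℝ} {rf : ℝ}

theorem dotProduct_excessReturn (u : Fin d → ℝ) (ω : Ω) :
    u ⬝ᵥ excessReturn μ γ A Z N rf ω =
      (u ⬝ᵥ fun i => μ i - rf) + (u ⬝ᵥ γ) * Z ω + √(Z ω) * ((Aᵀ *ᵥ u) ⬝ᵥ N ω) := by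
  have : excessReturn μ γ A Z N rf ω =
      (fun i => μ i - rf) + Z ω • γ + √(Z ω) • (A *ᵥ N ω) := by
    ext i
    simp only [excessReturn, nmvmX, Pi.add_apply, Pi.smul_apply, smul_eq_mul]
    ring
  rw [this, dotProduct_add, dotProduct_add, dotProduct_smul, dotProduct_smul, dotProduct_mulVec,
    ← mulVec_transpose, smul_eq_mul, smul_eq_mul, mul_comm (Z ω)]

variable [MeasurableSpace Ω] {P : Measure Ω}

theorem measurable_excessReturn (hZ : Measurable Z) (hN : Measurable N) :
    Measurable (excessReturn μ γ A Z N rf) := by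
  unfold excessReturn nmvmX
  fun_prop

theorem measure_dotProduct_excessReturn_lt_pos (hN : Measurable N)
    (hZpos : 0 < P {ω | 0 < Z ω})
    (hNlaw : P.map N = Measure.pi fun _ : Fin d => gaussianReal 0 1) (hindep : IndepFun Z N P)
    (hA : (A * Aᵀ).PosDef) {u : Fin d → ℝ} (hu : u ≠ 0) (c : ℝ) :
    0 < P {ω | u ⬝ᵥ excessReturn μ γ A Z N rf ω < c} := by
  simp_rw [dotProduct_excessReturn]
  exact measure_add_mul_add_sqrt_mul_dotProduct_lt_pos hN hZpos hNlaw hindep _ _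
    (mulVec_transpose_ne_zero_of_posDef hA hu) c

end NMVM

theorem stmt19_general {Ω : Type*} [MeasurableSpace Ω] (P : Measure Ω) [IsProbabilityMeasure P]
    {d : ℕ} (μ γ : Fin d → ℝ) (A : Matrix (Fin d) (Fin d) ℝ)
    (Z : Ω → ℝ) (N : Ω → Fin d → ℝ)
    (hZmeas : Measurable Z) (hNmeas : Measurable N)
    (hZposprob : 0 < P {ω | 0 < Z ω})
    (hNlaw : Measure.map N P = Measure.pi fun _ : Fin d => gaussianReal 0 1)
    (hindep : IndepFun Z N P)
    (hPD : (A * Aᵀ).PosDef)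
    (rf W0 : ℝ) (hW0 : 0 < W0)
    -- Assumption 1
    (U : ℝ → ℝ) (hUcont : Continuous U) (hUmono : Monotone U)
    (hUbdd : BddAbove (Set.range U))
    (hUbot : Tendsto U atBot atBot) :
    ∃ xstar : Fin d → ℝ,
      (eexp P fun ω => U (wealth μ γ A Z N rf W0 xstar ω)) < ⊤ ∧
      ∀ x : Fin d → ℝ,
        (eexp P fun ω => U (wealth μ γ A Z N rf W0 x ω)) ≤
          eexp P fun ω => U (wealth μ γ A Z N rf W0 xstar ω) := by
  set V : ℝ → ℝ := fun w => U (W0 * (1 + rf) + W0 * w)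
  have hV_mono : Monotone V := hUmono.comp fun _ _ h => by gcongr
  have hV_bdd : BddAbove (Set.range V) := hUbdd.mono (Set.range_comp_subset_range _ U)
  have hV_bot : Tendsto V atBot atBot :=
    hUbot.comp (tendsto_atBot_add_const_left _ _ (tendsto_id.const_mul_atBot hW0))
  -- `wealth μ γ A Z N rf W0 x ω` unfolds to `V (x ⬝ᵥ excessReturn μ γ A Z N rf ω)`.
  exact exists_forall_eexp_le_of_measure_dotProduct_lt_pos (measurable_excessReturn hZmeas hNmeas)
    (fun u hu => measure_dotProduct_excessReturn_lt_pos hNmeas hZposprob hNlaw hindep hPD hu _)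
    (by fun_prop) hV_mono hV_bdd hV_bot

/-- under Assumption 1 and `P(Z > 0) > 0` (with `Z` nonnegative and
finite-valued), the problem `max_x E[U(W(x))]` is well-posed: there is a portfolio `x⋆`
of finite Euclidean norm with `E[U(W(x))] ≤ E[U(W(x⋆))] < +∞` for all `x`. -/
theorem stmt19 {Ω : Type*} [MeasurableSpace Ω] (P : Measure Ω) [IsProbabilityMeasure P]
    {d : ℕ} (μ γ : Fin d → ℝ) (A : Matrix (Fin d) (Fin d) ℝ)
    (Z : Ω → ℝ) (N : Ω → Fin d → ℝ)
    (hZmeas : Measurable Z) (hNmeas : Measurable N)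
    (hZnonneg : ∀ ω, 0 ≤ Z ω)
    (hZposprob : 0 < P {ω | 0 < Z ω})
    (hNlaw : Measure.map N P = Measure.pi fun _ : Fin d => gaussianReal 0 1)
    (hindep : IndepFun Z N P)
    (hPD : (A * Aᵀ).PosDef)
    (rf W0 : ℝ) (hW0 : 0 < W0)
    (hμrf : (fun i => μ i - rf) ≠ 0)
    -- Assumption 1
    (U : ℝ → ℝ) (hUcont : Continuous U) (hUmono : Monotone U)
    (hUnonconst : ∃ w w' : ℝ, U w ≠ U w') (hUbdd : BddAbove (Set.range U))
    (hUbot : Tendsto U atBot atBot) :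
    ∃ xstar : Fin d → ℝ,
      (eexp P fun ω => U (wealth μ γ A Z N rf W0 xstar ω)) < ⊤ ∧
      ∀ x : Fin d → ℝ,
        (eexp P fun ω => U (wealth μ γ A Z N rf W0 x ω)) ≤
          eexp P fun ω => U (wealth μ γ A Z N rf W0 xstar ω) :=
  stmt19_general P μ γ A Z N hZmeas hNmeas hZposprob hNlaw hindep hPD rf W0 hW0 U hUcont hUmono
    hUbdd hUbot

end
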